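/- Let A be an amenable and Arens regular Banach algebra. If B is a normal dual Banach A-bimodule with predual X such that A·B* ⊆ X and B*·A ⊆ X, then H^1_{w*}(A**, B**) = {0}. -/

import Mathlib

/-!
Common definitions: duals, biduals, Arens products, module actions,
derivations, first cohomology-vanishing predicates, weak-star continuity.
-/

noncomputable section

open ContinuousLinearMap Filter Topology Function

namespace ArensPaper

variable (𝕜 : Type) [RCLike 𝕜]

/-- The (topological) dual of a normed space. -/
abbrev Du (X : Type) [NormedAddCommGroup X] [NormedSpace 𝕜 X] : Type :=
  StrongDual 𝕜 X

/-- The bidual of a normed space. -/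
abbrev Bi (X : Type) [NormedAddCommGroup X] [NormedSpace 𝕜 X] : Type :=
  Du 𝕜 (Du 𝕜 X)

/-- Canonical embedding of a normed space into its bidual. -/
abbrev inDu (X : Type) [NormedAddCommGroup X] [NormedSpace 𝕜 X] : X →L[𝕜] Bi 𝕜 X :=
  NormedSpace.inclusionInDoubleDual 𝕜 X

variable {X Y Z : Type} [NormedAddCommGroup X] [NormedSpace 𝕜 X]
  [NormedAddCommGroup Y] [NormedSpace 𝕜 Y] [NormedAddCommGroup Z] [NormedSpace 𝕜 Z]

/-- The transpose (Banach-space adjoint) of a continuous linear map. -/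
def tr (T : X →L[𝕜] Y) : Du 𝕜 Y →L[𝕜] Du 𝕜 X :=
  (compL 𝕜 X Y 𝕜).flip T

/-- The second transpose of a continuous linear map. -/
def bitr (T : X →L[𝕜] Y) : Bi 𝕜 X →L[𝕜] Bi 𝕜 Y :=
  tr 𝕜 (tr 𝕜 T)

/-- The adjoint of a continuous bilinear map `m : X × Y → Z`:
`⟨adj m z' x, y⟩ = ⟨z', m x y⟩`. -/
def adj (m : X →L[𝕜] Y →L[𝕜] Z) : Du 𝕜 Z →L[𝕜] X →L[𝕜] Du 𝕜 Y :=
  ((compL 𝕜 X (Y →L[𝕜] Z) (Du 𝕜 Y)).flip m).comp (compL 𝕜 Y Z 𝕜)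

/-- The first Arens (triple adjoint) extension of a continuous bilinear map
to the biduals: `⟨ar1 m F G, z'⟩ = ⟨F, fun x => ⟨G, fun y => ⟨z', m x y⟩⟩⟩`. -/
def ar1 (m : X →L[𝕜] Y →L[𝕜] Z) : Bi 𝕜 X →L[𝕜] Bi 𝕜 Y →L[𝕜] Bi 𝕜 Z :=
  adj 𝕜 (adj 𝕜 (adj 𝕜 m))

/-- The second Arens extension of a continuous bilinear map. -/
def ar2 (m : X →L[𝕜] Y →L[𝕜] Z) : Bi 𝕜 X →L[𝕜] Bi 𝕜 Y →L[𝕜] Bi 𝕜 Z :=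
  (ar1 𝕜 m.flip).flip

/-- A continuous bilinear map is Arens regular if its two Arens extensions agree. -/
def ArensRegularBil (m : X →L[𝕜] Y →L[𝕜] Z) : Prop :=
  ar1 𝕜 m = ar2 𝕜 m

/-- A map between dual spaces is weak*-weak*-continuous. -/
def WStarCont (f : Du 𝕜 X → Du 𝕜 Y) : Prop :=
  Continuous fun x : WeakDual 𝕜 X => (show WeakDual 𝕜 Y from f (show Du 𝕜 X from x))

/-- A map from a dual space to a normed space is weak*-weak-continuous. -/
def WStarWeakCont {B : Type} [NormedAddCommGroup B] [NormedSpace 𝕜 B]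
    (f : Du 𝕜 X → B) : Prop :=
  Continuous fun x : WeakDual 𝕜 X => (show WeakSpace 𝕜 B from f (show Du 𝕜 X from x))

/-- `D` is a derivation with respect to a product `p` on `C` and module actions
`l`, `r` of `C` on `E`. -/
def IsDer {C E : Type} [NormedAddCommGroup C] [NormedSpace 𝕜 C]
    [NormedAddCommGroup E] [NormedSpace 𝕜 E]
    (p : C → C → C) (l : C → E → E) (r : E → C → E) (D : C →L[𝕜] E) : Prop :=
  ∀ a b : C, D (p a b) = l a (D b) + r (D a) b

/-- `D` is an inner derivation for the module actions `l`, `r`. -/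
def IsInner {C E : Type} [NormedAddCommGroup C] [NormedSpace 𝕜 C]
    [NormedAddCommGroup E] [NormedSpace 𝕜 E]
    (l : C → E → E) (r : E → C → E) (D : C →L[𝕜] E) : Prop :=
  ∃ x : E, ∀ a : C, D a = l a x - r x a

/-- A Banach algebra has a left bounded approximate identity. -/
def HasLBAI (A : Type) [NonUnitalNormedRing A] : Prop :=
  ∃ (ι : Type) (L : Filter ι) (e : ι → A), L.NeBot ∧ (∃ c : ℝ, ∀ i, ‖e i‖ ≤ c) ∧
    ∀ a : A, Tendsto (fun i => e i * a) L (𝓝 a)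

/-- A Banach bimodule structure on `E` over the "Banach algebra" `(C, p)`. -/
structure BimodStr {C : Type} [NormedAddCommGroup C] [NormedSpace 𝕜 C]
    (p : C →L[𝕜] C →L[𝕜] C) (E : Type) [NormedAddCommGroup E] [NormedSpace 𝕜 E] :
    Type where
  l : C →L[𝕜] E →L[𝕜] E
  r : E →L[𝕜] C →L[𝕜] E
  l_mul : ∀ a b x, l (p a b) x = l a (l b x)
  r_mul : ∀ x a b, r (r x a) b = r x (p a b)
  lr : ∀ a x b, r (l a x) b = l a (r x b)

/-- A bundled Banach bimodule over the "Banach algebra" `(C, p)`. -/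
structure BBimod {C : Type} [NormedAddCommGroup C] [NormedSpace 𝕜 C]
    (p : C →L[𝕜] C →L[𝕜] C) : Type 1 where
  E : Type
  [grp : NormedAddCommGroup E]
  [mod : NormedSpace 𝕜 E]
  [cpl : CompleteSpace E]
  str : BimodStr 𝕜 p E

attribute [instance] BBimod.grp BBimod.mod BBimod.cpl

/-- Amenability of the "Banach algebra" `(C, p)`: every continuous derivation into the
dual of any Banach bimodule is inner. -/
def IsAmenableP {C : Type} [NormedAddCommGroup C] [NormedSpace 𝕜 C]
    (p : C →L[𝕜] C →L[𝕜] C) : Prop :=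
  ∀ (M : BBimod 𝕜 p) (D : C →L[𝕜] Du 𝕜 M.E),
    IsDer 𝕜 (fun a b => p a b)
      (fun a f => f.comp (M.str.r.flip a)) (fun f a => f.comp (M.str.l a)) D →
    IsInner 𝕜 (fun a f => f.comp (M.str.r.flip a)) (fun f a => f.comp (M.str.l a)) D

/-- Weak amenability of a Banach algebra: every continuous derivation into the dual
(with the dual actions of the regular bimodule) is inner. -/
def WeaklyAmenable (A : Type) [NonUnitalNormedRing A] [NormedSpace 𝕜 A]
    [IsScalarTower 𝕜 A A] [SMulCommClass 𝕜 A A] : Prop :=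
  ∀ D : A →L[𝕜] Du 𝕜 A,
    IsDer 𝕜 (fun a b => a * b)
      (fun a f => f.comp ((ContinuousLinearMap.mul 𝕜 A).flip a))
      (fun f a => f.comp (ContinuousLinearMap.mul 𝕜 A a)) D →
    IsInner 𝕜 (fun a f => f.comp ((ContinuousLinearMap.mul 𝕜 A).flip a))
      (fun f a => f.comp (ContinuousLinearMap.mul 𝕜 A a)) D

/-- The embedding of the predual `X` into the dual `A*`, given an identification
`j : A ≃ X*`. -/
def predualEmbed {A X : Type} [NormedAddCommGroup A] [NormedSpace 𝕜 A]
    [NormedAddCommGroup X] [NormedSpace 𝕜 X] (j : A ≃ₗᵢ[𝕜] Du 𝕜 X) (x : X) : Du 𝕜 A :=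
  (inDu 𝕜 X x).comp j.toLinearIsometry.toContinuousLinearMap

/-- `j : A ≃ X*` makes `A` a dual Banach algebra: the image of `X` in `A*` is a
submodule of `A*` for the dual actions. -/
def IsDualBanachAlgebra {A X : Type} [NonUnitalNormedRing A] [NormedSpace 𝕜 A]
    [IsScalarTower 𝕜 A A] [SMulCommClass 𝕜 A A]
    [NormedAddCommGroup X] [NormedSpace 𝕜 X] (j : A ≃ₗᵢ[𝕜] Du 𝕜 X) : Prop :=
  ∀ (a : A) (x : X),
    ((predualEmbed 𝕜 j x).comp ((ContinuousLinearMap.mul 𝕜 A).flip a)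
        ∈ Set.range (predualEmbed 𝕜 j)) ∧
    ((predualEmbed 𝕜 j x).comp (ContinuousLinearMap.mul 𝕜 A a)
        ∈ Set.range (predualEmbed 𝕜 j))

/-- A normed space is weakly sequentially complete. -/
def WSCSpace (E : Type) [NormedAddCommGroup E] [NormedSpace 𝕜 E] : Prop :=
  ∀ f : ℕ → E,
    (∀ φ : Du 𝕜 E, ∃ L : 𝕜, Tendsto (fun n => φ (f n)) atTop (𝓝 L)) →
    ∃ e : E, ∀ φ : Du 𝕜 E, Tendsto (fun n => φ (f n)) atTop (𝓝 (φ e))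

/-- Left multiplication by `a ∈ A` restricted to an ideal `I`. -/
def mulLRes {A : Type} [NonUnitalNormedRing A] [NormedSpace 𝕜 A]
    [IsScalarTower 𝕜 A A] [SMulCommClass 𝕜 A A] (I : Submodule 𝕜 A) (a : A)
    (h : ∀ x : I, a * (x : A) ∈ I) : I →L[𝕜] I :=
  ((ContinuousLinearMap.mul 𝕜 A a).comp I.subtypeL).codRestrict I h

/-- Right multiplication by `a ∈ A` restricted to an ideal `I`. -/
def mulRRes {A : Type} [NonUnitalNormedRing A] [NormedSpace 𝕜 A]
    [IsScalarTower 𝕜 A A] [SMulCommClass 𝕜 A A] (I : Submodule 𝕜 A) (a : A)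
    (h : ∀ x : I, (x : A) * a ∈ I) : I →L[𝕜] I :=
  (((ContinuousLinearMap.mul 𝕜 A).flip a).comp I.subtypeL).codRestrict I h


/-- Connes-amenability of the bidual algebra `(A**, p)`: every weak*-weak*-continuous
derivation into a normal dual Banach bimodule is inner. -/
def ConnesAmenableBidual {A : Type} [NonUnitalNormedRing A] [NormedSpace 𝕜 A]
    [IsScalarTower 𝕜 A A] [SMulCommClass 𝕜 A A]
    (p : Bi 𝕜 A →L[𝕜] Bi 𝕜 A →L[𝕜] Bi 𝕜 A) : Prop :=
  ∀ (X : Type) [NormedAddCommGroup X] [NormedSpace 𝕜 X] [CompleteSpace X]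
    (M : BimodStr 𝕜 p (Du 𝕜 X)),
    (∀ f : Du 𝕜 X, WStarCont 𝕜 (fun m : Bi 𝕜 A => M.l m f) ∧
        WStarCont 𝕜 (fun m : Bi 𝕜 A => M.r f m)) →
    ∀ D : Bi 𝕜 A →L[𝕜] Du 𝕜 X,
      IsDer 𝕜 (fun m n => p m n) (fun m f => M.l m f) (fun f m => M.r f m) D →
      WStarCont 𝕜 (fun m => D m) →
      IsInner 𝕜 (fun m f => M.l m f) (fun f m => M.r f m) D

/-!
Restricted to `A`, a weak*-continuous derivation `D : A** → B**` is a derivation into the dual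
of the bimodule `B* = X**`, hence inner by amenability, implemented by some `Φ ∈ B**`. Since `A`
acts on `B*` with values in `X`, only the restriction of `Φ` to `X` matters, so `Φ` may be
replaced by its Dixmier projection, which lies in the canonical copy of `B`. The inner derivation
of `A**` it implements is then weak*-continuous and agrees with `D` on the weak*-dense copy of
`A`, hence everywhere.
-/

section WeakStar

variable {𝕜 : Type} [RCLike 𝕜]

theorem exists_eq_apply_of_continuous_weakDual {E : Type} [NormedAddCommGroup E]
    [NormedSpace 𝕜 E] (Ψ : Du 𝕜 E →ₗ[𝕜] 𝕜)
    (hΨ : Continuous fun x : WeakDual 𝕜 E => Ψ (show Du 𝕜 E from x)) :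
    ∃ e : E, ∀ x : Du 𝕜 E, Ψ x = x e := by
  obtain ⟨e, he⟩ := LinearMap.dualEmbedding_surjective (topDualPairing 𝕜 E)
    (⟨Ψ, hΨ⟩ : StrongDual 𝕜 (WeakDual 𝕜 E))
  exact ⟨e, fun x => (DFunLike.congr_fun he x).symm⟩

theorem eq_zero_of_continuous_weakDual_of_apply_inDu {A : Type} [NormedAddCommGroup A]
    [NormedSpace 𝕜 A] (Ψ : Bi 𝕜 A →ₗ[𝕜] 𝕜)
    (hΨ : Continuous fun m : WeakDual 𝕜 (Du 𝕜 A) => Ψ (show Bi 𝕜 A from m))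
    (h : ∀ a : A, Ψ (inDu 𝕜 A a) = 0) : Ψ = 0 := by
  obtain ⟨φ, hφ⟩ := exists_eq_apply_of_continuous_weakDual Ψ hΨ
  have hφ0 : φ = 0 := by
    ext a
    simpa [hφ] using h a
  ext m
  simp [hφ, hφ0]

variable {X Y : Type} [NormedAddCommGroup X] [NormedSpace 𝕜 X]
  [NormedAddCommGroup Y] [NormedSpace 𝕜 Y]

theorem WStarCont.sub {f g : Du 𝕜 X →L[𝕜] Du 𝕜 Y} (hf : WStarCont 𝕜 fun x => f x)
    (hg : WStarCont 𝕜 fun x => g x) : WStarCont 𝕜 fun x => (f - g) x :=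
  WeakDual.continuous_of_continuous_eval fun y =>
    ((WeakDual.eval_continuous y).comp hf).sub ((WeakDual.eval_continuous y).comp hg)

theorem ext_of_wStarCont {A : Type} [NormedAddCommGroup A] [NormedSpace 𝕜 A]
    {D₁ D₂ : Bi 𝕜 A →L[𝕜] Du 𝕜 Y} (h₁ : WStarCont 𝕜 fun m => D₁ m)
    (h₂ : WStarCont 𝕜 fun m => D₂ m) (h : ∀ a : A, D₁ (inDu 𝕜 A a) = D₂ (inDu 𝕜 A a)) :
    D₁ = D₂ := by
  ext m y
  have hΨ := eq_zero_of_continuous_weakDual_of_apply_inDu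
    ((ContinuousLinearMap.apply 𝕜 𝕜 y).comp (D₁ - D₂)).toLinearMap
    ((WeakDual.eval_continuous y).comp (h₁.sub h₂)) (fun a => by simp [h a])
  simpa [sub_eq_zero] using LinearMap.congr_fun hΨ m

end WeakStar

section Arens

variable {𝕜 : Type} [RCLike 𝕜] {X Y Z : Type} [NormedAddCommGroup X] [NormedSpace 𝕜 X]
  [NormedAddCommGroup Y] [NormedSpace 𝕜 Y] [NormedAddCommGroup Z] [NormedSpace 𝕜 Z]

theorem ar1_inDu_inDu (m : X →L[𝕜] Y →L[𝕜] Z) (x : X) (y : Y) :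
    ar1 𝕜 m (inDu 𝕜 X x) (inDu 𝕜 Y y) = inDu 𝕜 Z (m x y) :=
  rfl

theorem wStarCont_ar1_left (m : X →L[𝕜] Y →L[𝕜] Z) (G : Bi 𝕜 Y) :
    WStarCont 𝕜 fun F => ar1 𝕜 m F G :=
  WeakDual.continuous_of_continuous_eval fun z => WeakDual.eval_continuous (adj 𝕜 (adj 𝕜 m) G z)

theorem wStarCont_ar1_inDu_right (m : X →L[𝕜] Y →L[𝕜] Z) (x : X) :
    WStarCont 𝕜 fun G => ar1 𝕜 m (inDu 𝕜 X x) G :=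
  WeakDual.continuous_of_continuous_eval fun z => WeakDual.eval_continuous (tr 𝕜 (m x) z)

end Arens

section DualBimodule

variable {𝕜 : Type} [RCLike 𝕜] {C E : Type} [NormedAddCommGroup C] [NormedSpace 𝕜 C]
  [NormedAddCommGroup E] [NormedSpace 𝕜 E] {p : C →L[𝕜] C →L[𝕜] C}

/-- The dual bimodule: `(a·ψ)(e) = ψ(e·a)` and `(ψ·a)(e) = ψ(a·e)`. -/
def BimodStr.dual (M : BimodStr 𝕜 p E) : BimodStr 𝕜 p (Du 𝕜 E) where
  l := (compL 𝕜 E E 𝕜).flip.comp M.r.flip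
  r := ((compL 𝕜 E E 𝕜).flip.comp M.l).flip
  l_mul a b ψ := by
    ext e
    exact congrArg ψ (M.r_mul e a b).symm
  r_mul ψ a b := by
    ext e
    exact congrArg ψ (M.l_mul a b e).symm
  lr a ψ b := by
    ext e
    exact congrArg ψ (M.lr b e a)

theorem ar1_l_inDu (M : BimodStr 𝕜 p E) (a : C) (Φ : Bi 𝕜 E) :
    ar1 𝕜 M.l (inDu 𝕜 C a) Φ = Φ.comp (M.dual.r.flip a) :=
  rfl

theorem ar1_r_inDu (M : BimodStr 𝕜 p E) (Φ : Bi 𝕜 E) (a : C) :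
    ar1 𝕜 M.r Φ (inDu 𝕜 C a) = Φ.comp (M.dual.l a) :=
  rfl

theorem isDer_comp_inDu (M : BimodStr 𝕜 p E) (D : Bi 𝕜 C →L[𝕜] Bi 𝕜 E)
    (hD : IsDer 𝕜 (fun m n => ar1 𝕜 p m n) (fun m F => ar1 𝕜 M.l m F)
      (fun F m => ar1 𝕜 M.r F m) D) :
    IsDer 𝕜 (fun a b => p a b) (fun a Φ => Φ.comp (M.dual.r.flip a))
      (fun Φ a => Φ.comp (M.dual.l a)) (D.comp (inDu 𝕜 C)) := by
  intro a b
  simpa only [coe_comp, Function.comp_apply, ar1_inDu_inDu, ar1_l_inDu, ar1_r_inDu] using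
    hD (inDu 𝕜 C a) (inDu 𝕜 C b)

end DualBimodule

section Predual

variable {𝕜 : Type} [RCLike 𝕜] {X : Type} [NormedAddCommGroup X] [NormedSpace 𝕜 X]

def dixmierProj : Bi 𝕜 (Du 𝕜 X) →L[𝕜] Bi 𝕜 (Du 𝕜 X) :=
  (inDu 𝕜 (Du 𝕜 X)).comp (tr 𝕜 (inDu 𝕜 X))

theorem dixmierProj_comp_of_range_subset (Φ : Bi 𝕜 (Du 𝕜 X)) {T : Bi 𝕜 X →L[𝕜] Bi 𝕜 X}
    (hT : ∀ F, T F ∈ Set.range (inDu 𝕜 X)) : (dixmierProj Φ).comp T = Φ.comp T := by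
  ext F
  obtain ⟨x, hx⟩ := hT F
  simp only [coe_comp, Function.comp_apply, ← hx]
  rfl

end Predual

theorem statement7_general {𝕜 : Type} [RCLike 𝕜] {A : Type}
    [NonUnitalNormedRing A] [NormedSpace 𝕜 A] [IsScalarTower 𝕜 A A]
    [SMulCommClass 𝕜 A A]
    {X : Type} [NormedAddCommGroup X] [NormedSpace 𝕜 X]
    -- `B = X*` is a dual Banach `A`-bimodule with predual `X`
    (M : BimodStr 𝕜 (ContinuousLinearMap.mul 𝕜 A) (Du 𝕜 X))
    -- `A` is amenable
    (hamen : IsAmenableP 𝕜 (ContinuousLinearMap.mul 𝕜 A))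
    -- `A·B* ⊆ X` and `B*·A ⊆ X`
    (hsub : ∀ (a : A) (F : Bi 𝕜 X),
      F.comp (M.r.flip a) ∈ Set.range (inDu 𝕜 X) ∧
      F.comp (M.l a) ∈ Set.range (inDu 𝕜 X)) :
    -- `H^1_{w*}(A**, B**) = {0}`
    ∀ D : Bi 𝕜 A →L[𝕜] Bi 𝕜 (Du 𝕜 X),
      IsDer 𝕜 (fun m n => ar1 𝕜 (ContinuousLinearMap.mul 𝕜 A) m n)
        (fun (m : Bi 𝕜 A) (F : Bi 𝕜 (Du 𝕜 X)) => ar1 𝕜 M.l m F)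
        (fun (F : Bi 𝕜 (Du 𝕜 X)) (m : Bi 𝕜 A) => ar1 𝕜 M.r F m) D →
      WStarCont 𝕜 (fun m => D m) →
      IsInner 𝕜 (fun (m : Bi 𝕜 A) (F : Bi 𝕜 (Du 𝕜 X)) => ar1 𝕜 M.l m F)
        (fun (F : Bi 𝕜 (Du 𝕜 X)) (m : Bi 𝕜 A) => ar1 𝕜 M.r F m) D := by
  intro D hD hD_cont
  obtain ⟨Φ, hΦ⟩ := hamen ⟨Bi 𝕜 X, M.dual⟩ (D.comp (inDu 𝕜 A)) (isDer_comp_inDu M D hD)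
  set δ : Bi 𝕜 A →L[𝕜] Bi 𝕜 (Du 𝕜 X) :=
    (ar1 𝕜 M.l).flip (dixmierProj Φ) - ar1 𝕜 M.r (dixmierProj Φ)
  have hδ_cont : WStarCont 𝕜 fun m => δ m :=
    (wStarCont_ar1_left M.l _).sub (wStarCont_ar1_inDu_right M.r _)
  have hDδ : ∀ a : A, D (inDu 𝕜 A a) = δ (inDu 𝕜 A a) := fun a => by
    simp only [δ, sub_apply, flip_apply, ar1_l_inDu, ar1_r_inDu,
      dixmierProj_comp_of_range_subset Φ (T := M.dual.r.flip a) fun F => (hsub a F).2,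
      dixmierProj_comp_of_range_subset Φ (T := M.dual.l a) fun F => (hsub a F).1]
    exact hΦ a
  refine ⟨dixmierProj Φ, fun m => ?_⟩
  rw [ext_of_wStarCont hD_cont hδ_cont hDδ]
  rfl

/-- Let `A` be an amenable and Arens regular Banach algebra.  If `B = X*` is a normal dual
Banach `A`-bimodule with predual `X` such that `A·B* ⊆ X` and `B*·A ⊆ X`, then
`H^1_{w*}(A**, B**) = {0}`. -/
theorem statement7 {𝕜 : Type} [RCLike 𝕜] {A : Type}
    [NonUnitalNormedRing A] [NormedSpace 𝕜 A] [IsScalarTower 𝕜 A A]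
    [SMulCommClass 𝕜 A A] [CompleteSpace A]
    {X : Type} [NormedAddCommGroup X] [NormedSpace 𝕜 X] [CompleteSpace X]
    -- `B = X*` is a dual Banach `A`-bimodule with predual `X`
    (M : BimodStr 𝕜 (ContinuousLinearMap.mul 𝕜 A) (Du 𝕜 X))
    -- `A` is amenable
    (hamen : IsAmenableP 𝕜 (ContinuousLinearMap.mul 𝕜 A))
    -- `A` is Arens regular
    (hreg : ArensRegularBil 𝕜 (ContinuousLinearMap.mul 𝕜 A))
    -- `B` is a normal dual bimodule
    (hnormal : ∀ f : Du 𝕜 X,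
      (Continuous fun a : A => (show WeakDual 𝕜 X from M.l a f)) ∧
      (Continuous fun a : A => (show WeakDual 𝕜 X from M.r f a)))
    -- `A·B* ⊆ X` and `B*·A ⊆ X`
    (hsub : ∀ (a : A) (F : Bi 𝕜 X),
      F.comp (M.r.flip a) ∈ Set.range (inDu 𝕜 X) ∧
      F.comp (M.l a) ∈ Set.range (inDu 𝕜 X)) :
    -- `H^1_{w*}(A**, B**) = {0}`
    ∀ D : Bi 𝕜 A →L[𝕜] Bi 𝕜 (Du 𝕜 X),
      IsDer 𝕜 (fun m n => ar1 𝕜 (ContinuousLinearMap.mul 𝕜 A) m n)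
        (fun (m : Bi 𝕜 A) (F : Bi 𝕜 (Du 𝕜 X)) => ar1 𝕜 M.l m F)
        (fun (F : Bi 𝕜 (Du 𝕜 X)) (m : Bi 𝕜 A) => ar1 𝕜 M.r F m) D →
      WStarCont 𝕜 (fun m => D m) →
      IsInner 𝕜 (fun (m : Bi 𝕜 A) (F : Bi 𝕜 (Du 𝕜 X)) => ar1 𝕜 M.l m F)
        (fun (F : Bi 𝕜 (Du 𝕜 X)) (m : Bi 𝕜 A) => ar1 𝕜 M.r F m) D :=
  statement7_general M hamen hsub

end ArensPaper
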